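/- The vector fields H₁ and H₂ commute, where H₁ = −h∂_h − 6φ∂_φ − 2q∂_q + (3h³/2)cosψ ∂_θ + (3h³/2)sinψ ∂_φ + 3sin(2ψ)∂_ψ − 3cos(2ψ)h∂_h − (h³/2)sin(3ψ)∂_φ + (h³/2)cos(3ψ)∂_θ and H₂ = −6θ∂_θ − 2h∂_h − 4q∂_q − 6φ∂_φ, as vector fields on ℝ⁵ with coordinates (θ, φ, h, q, ψ). -/

import Mathlib

/-- Lie bracket of vector fields on ℝⁿ. -/
noncomputable def vfBracket {n : ℕ} (X Y : (Fin n → ℝ) → (Fin n → ℝ)) :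
    (Fin n → ℝ) → (Fin n → ℝ) :=
  fun x => fderiv ℝ Y x (X x) - fderiv ℝ X x (Y x)

/-- H₁ on ℝ⁵, coordinates (θ,φ,h,q,ψ) = (0,1,2,3,4). -/
noncomputable def H1 : (Fin 5 → ℝ) → (Fin 5 → ℝ) := fun x =>
  ![(3 * (x 2) ^ 3 / 2) * Real.cos (x 4) + ((x 2) ^ 3 / 2) * Real.cos (3 * x 4),
    -6 * x 1 + (3 * (x 2) ^ 3 / 2) * Real.sin (x 4) - ((x 2) ^ 3 / 2) * Real.sin (3 * x 4),
    -(x 2) - 3 * Real.cos (2 * x 4) * x 2,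
    -2 * x 3,
    3 * Real.sin (2 * x 4)]

/-- H₂ on ℝ⁵. -/
noncomputable def H2 : (Fin 5 → ℝ) → (Fin 5 → ℝ) := fun x =>
  ![-6 * x 0, -6 * x 1, -2 * x 2, -4 * x 3, 0]


/-!
H₂ is the linear diagonal field with weights w = (−6, −6, −2, −4, 0), whose flow is
φₜ(x)ᵢ = e^{t wᵢ} xᵢ. H₁ is weighted homogeneous for these weights (h³ has the weight of θ and φ,
h that of h, q that of q, and ψ has weight 0), i.e. H₁ ∘ φₜ = φₜ ∘ H₁. Differentiating at t = 0
gives DH₁(x)(H₂ x) = H₂(H₁ x) = DH₂(x)(H₁ x), which is [H₁, H₂] = 0.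
-/

section Flow

variable {E : Type*} [NormedAddCommGroup E] [NormedSpace ℝ E]

theorem fderiv_apply_generator_eq_of_flow_equivariant {X V : E → E} {δ : ℝ → E → E} {x : E}
    (hX : DifferentiableAt ℝ X x) (hδ₀ : δ 0 x = x)
    (hV : ∀ y, HasDerivAt (fun t => δ t y) (V y) 0) (hXδ : ∀ t, X (δ t x) = δ t (X x)) :
    fderiv ℝ X x (V x) = V (X x) := by
  have hcomp : HasDerivAt (X ∘ fun t => δ t x) (fderiv ℝ X x (V x)) 0 :=
    hX.hasFDerivAt.comp_hasDerivAt_of_eq 0 (hV x) hδ₀.symm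
  rw [show X ∘ (fun t => δ t x) = fun t => δ t (X x) from funext hXδ] at hcomp
  exact hcomp.unique (hV (X x))

end Flow

theorem vfBracket_clm_apply {n : ℕ} (X : (Fin n → ℝ) → (Fin n → ℝ))
    (L : (Fin n → ℝ) →L[ℝ] (Fin n → ℝ)) (x : Fin n → ℝ) :
    vfBracket X L x = L (X x) - fderiv ℝ X x (L x) := by
  rw [vfBracket, L.fderiv]

theorem vfBracket_eq_zero_of_flow_equivariant {n : ℕ} {X : (Fin n → ℝ) → (Fin n → ℝ)}
    {L : (Fin n → ℝ) →L[ℝ] (Fin n → ℝ)} {δ : ℝ → (Fin n → ℝ) → (Fin n → ℝ)} {x : Fin n → ℝ}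
    (hX : DifferentiableAt ℝ X x) (hδ₀ : δ 0 x = x)
    (hL : ∀ y, HasDerivAt (fun t => δ t y) (L y) 0) (hXδ : ∀ t, X (δ t x) = δ t (X x)) :
    vfBracket X L x = 0 := by
  rw [vfBracket_clm_apply, fderiv_apply_generator_eq_of_flow_equivariant hX hδ₀ hL hXδ, sub_self]

section Diagonal

variable {n : ℕ} (w : Fin n → ℝ)

def diagonalField : (Fin n → ℝ) →L[ℝ] (Fin n → ℝ) :=
  ContinuousLinearMap.pi fun i => w i • ContinuousLinearMap.proj i

@[simp]
theorem diagonalField_apply (y : Fin n → ℝ) (i : Fin n) : diagonalField w y i = w i * y i :=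
  rfl

noncomputable def diagonalFlow (t : ℝ) (y : Fin n → ℝ) : Fin n → ℝ :=
  fun i => Real.exp (t * w i) * y i

theorem diagonalFlow_zero (y : Fin n → ℝ) : diagonalFlow w 0 y = y := by
  ext i
  simp [diagonalFlow]

theorem hasDerivAt_diagonalFlow (y : Fin n → ℝ) :
    HasDerivAt (fun t => diagonalFlow w t y) (diagonalField w y) 0 := by
  refine hasDerivAt_pi.2 fun i => ?_
  have := (((hasDerivAt_id (0 : ℝ)).mul_const (w i)).exp).mul_const (y i)
  simpa [diagonalFlow] using this

end Diagonal

def weightsH2 : Fin 5 → ℝ := ![-6, -6, -2, -4, 0]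

theorem H2_eq_diagonalField : H2 = diagonalField weightsH2 := by
  ext y i
  fin_cases i <;> simp [H2, weightsH2]

theorem differentiable_H1 : Differentiable ℝ H1 := by
  refine fun x => differentiableAt_pi.2 fun i => ?_
  fin_cases i <;>
    simp only [H1, Fin.zero_eta, Fin.mk_one, Fin.reduceFinMk, Matrix.cons_val_zero,
      Matrix.cons_val_one, Matrix.cons_val] <;> fun_prop

theorem H1_diagonalFlow (t : ℝ) (x : Fin 5 → ℝ) :
    H1 (diagonalFlow weightsH2 t x) = diagonalFlow weightsH2 t (H1 x) := by
  have h6 : Real.exp (-(t * 6)) = Real.exp (-(t * 2)) ^ 3 := by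
    rw [← Real.exp_nat_mul]; ring_nf
  have h4 : Real.exp (-(t * 4)) = Real.exp (-(t * 2)) ^ 2 := by
    rw [← Real.exp_nat_mul]; ring_nf
  ext i
  fin_cases i <;> simp [H1, diagonalFlow, weightsH2, h6, h4] <;> ring

/-- the vector fields H₁ and H₂ commute. -/
theorem stmt10 : ∀ x : Fin 5 → ℝ, vfBracket H1 H2 x = 0 := by
  intro x
  rw [H2_eq_diagonalField]
  exact vfBracket_eq_zero_of_flow_equivariant (differentiable_H1 x) (diagonalFlow_zero _ x)
    (hasDerivAt_diagonalFlow _) (fun t => H1_diagonalFlow t x)
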